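/- arXiv:math/0103148 — 5 statements merged into one kernel-verified Lean document; each statement's English description precedes it below -/
import Mathlib

section
/- Let G be a group with elements x₁, x₂, x₃ generating a free subgroup of rank 3, and let φ₁, φ₂ ∈ Aut(G) satisfy φᵢ(xⱼ) = xⱼ for i,j ∈ {1,2} and φᵢ(x₃) = x₃xᵢ for i ∈ {1,2}. Then for every nontrivial reduced word w(a,b) in the free group on two letters, w(φ₁,φ₂)(x₃) = x₃ · w(x₁,x₂); in particular w(φ₁,φ₂) ≠ id, so ⟨φ₁,φ₂⟩ is a free group of rank 2. -/
/-!
Every word in the `φᵢ` fixes `x₁, x₂`, so `w ↦ x₃⁻¹ · w(φ)(x₃)` is a homomorphism that sends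
`φᵢ` to `xᵢ`; it is therefore `w ↦ w(x₁, x₂)`, which is injective because `x₁, x₂` freely
generate a free group. Hence `w(φ)` moves `x₃` unless `w = 1`.
-/

open Function

section

variable {ι κ G : Type*} [Group G]

theorem lift_apply_eq_self_of_forall {φ : ι → MulAut G} {y : G} (hy : ∀ i, φ i y = y)
    (w : FreeGroup ι) : FreeGroup.lift φ w y = y :=
  FreeGroup.range_lift_le (s := MulAction.stabilizer (MulAut G) y)
    (by rintro _ ⟨i, rfl⟩; exact hy i) ⟨w, rfl⟩

theorem lift_apply_lift_eq_self {φ : ι → MulAut G} {u : κ → G} (hu : ∀ i j, φ i (u j) = u j)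
    (w : FreeGroup ι) (v : FreeGroup κ) :
    FreeGroup.lift φ w (FreeGroup.lift u v) = FreeGroup.lift u v := by
  have hcomp : (FreeGroup.lift φ w).toMonoidHom.comp (FreeGroup.lift u) = FreeGroup.lift u :=
    FreeGroup.ext_hom _ _ fun j => by simpa using lift_apply_eq_self_of_forall (fun i => hu i j) w
  exact DFunLike.congr_fun hcomp v

theorem lift_apply_eq_mul_lift {φ : ι → MulAut G} {u : ι → G} {c : G}
    (hu : ∀ i j, φ i (u j) = u j) (hc : ∀ i, φ i c = c * u i) (w : FreeGroup ι) :
    FreeGroup.lift φ w c = c * FreeGroup.lift u w := by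
  induction w using FreeGroup.induction_on with
  | C1 => simp
  | of i => simpa using hc i
  | inv_of i _ =>
    rw [map_inv, map_inv, FreeGroup.lift_apply_of, FreeGroup.lift_apply_of, MulAut.inv_apply,
      MulEquiv.symm_apply_eq, map_mul, map_inv, hc, hu, mul_inv_cancel_right]
  | mul v w hv hw =>
    rw [map_mul, map_mul, MulAut.mul_apply, hw, map_mul, hv, lift_apply_lift_eq_self hu,
      mul_assoc]

theorem lift_comp_injective {f : κ → ι} (hf : Injective f) {x : ι → G}
    (hx : Injective (FreeGroup.lift x)) : Injective (FreeGroup.lift (x ∘ f)) := by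
  have hcomp : FreeGroup.lift (x ∘ f) = (FreeGroup.lift x).comp (FreeGroup.map f) :=
    FreeGroup.ext_hom _ _ fun _ => by simp
  rw [hcomp]
  exact hx.comp (FreeGroup.map_injective hf)

theorem injective_of_apply_eq_mul {H : Type*} [Group H] {ψ : H →* MulAut G} {L : H →* G}
    (hL : Injective L) {c : G} (hc : ∀ h, ψ h c = c * L h) : Injective ψ := by
  refine (injective_iff_map_eq_one ψ).2 fun h hh => (injective_iff_map_eq_one L).1 hL h ?_
  simpa [hh] using (hc h).symm

end

/-- If `x₁, x₂, x₃ ∈ G` generate a free subgroup of rank 3 and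
`φ₁, φ₂ ∈ Aut(G)` fix `x₁, x₂` and send `x₃ ↦ x₃ xᵢ`, then every word `w` in `φ₁, φ₂`
satisfies `w(φ₁,φ₂)(x₃) = x₃ · w(x₁,x₂)`; in particular every nontrivial word gives a
nontrivial automorphism, so `⟨φ₁, φ₂⟩` is free of rank 2. -/
theorem stmt2 {G : Type} [Group G] (x : Fin 3 → G)
    (hx : Function.Injective (FreeGroup.lift x))
    (φ : Fin 2 → MulAut G)
    (hfix : ∀ i j : Fin 2, φ i (x j.castSucc) = x j.castSucc)
    (hx3 : ∀ i : Fin 2, φ i (x 2) = x 2 * x i.castSucc) :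
    (∀ w : FreeGroup (Fin 2),
        (FreeGroup.lift φ w) (x 2) = x 2 * FreeGroup.lift (fun i => x i.castSucc) w) ∧
    (∀ w : FreeGroup (Fin 2), w ≠ 1 → FreeGroup.lift φ w ≠ 1) ∧
    Function.Injective (FreeGroup.lift φ) := by
  have hcocycle := lift_apply_eq_mul_lift hfix hx3
  have hinj : Injective (FreeGroup.lift φ) :=
    injective_of_apply_eq_mul (lift_comp_injective (Fin.castSucc_injective 2) hx) hcocycle
  exact ⟨hcocycle, fun w hw h => hw (hinj (h.trans (map_one _).symm)), hinj⟩
end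

section
/- Let G be a group with elements x₁, x₂, x₃ generating a free subgroup of rank 3, let φ₁, φ₂ be a poison subgroup of Aut(G) with respect to x₁, x₂, x₃, and let αᵢ denote conjugation by xᵢ for i = 1,2,3. If a nontrivial reduced word w(φ₁,φ₂) lies in ⟨α₁, α₂, α₃⟩, then w(φ₁,φ₂) = id. -/
/-!
A word `ψ = w(φ₁, φ₂)` fixes `x₁` and `x₂` and sends `x₃` to `x₃ · w(x₁, x₂)`. If `ψ` is
conjugation by some `g ∈ ⟨x₁, x₂, x₃⟩ ≅ F₃`, then in `F₃` the element `g` commutes with `x₁` and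
conjugates `x₃` to `x₃ · w(x₁, x₂)`. The retraction `F₃ → F₂` sending `x₃` to `x₁` turns these into
`ḡ x₁ = x₁ ḡ` and `ḡ x₁ ḡ⁻¹ = x₁ w`, so `w = 1` already in the free group.
-/

open FreeGroup (lift lift_apply_of map of ext_hom lift_unique range_lift_le range_lift_eq_closure)

theorem FreeGroup.lift_map_apply {α β H : Type*} [Group H] (f : α → β) (y : β → H)
    (w : FreeGroup α) : lift y (map f w) = lift (y ∘ f) w :=
  lift_unique ((lift y).comp (map f)) (by simp)

theorem FreeGroup.eq_one_of_commute_castSucc_of_conj_last {n : ℕ} (k : Fin n)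
    {v : FreeGroup (Fin (n + 1))} {w : FreeGroup (Fin n)} (hk : Commute v (of k.castSucc))
    (hlast : v * of (Fin.last n) * v⁻¹ = of (Fin.last n) * map Fin.castSucc w) : w = 1 := by
  set ρ := map (Fin.lastCases k id : Fin (n + 1) → Fin n)
  have hρ : ρ (map Fin.castSucc w) = w := by
    rw [map.comp, show Fin.lastCases k id ∘ Fin.castSucc = id from funext fun _ => by simp,
      map.id]
  have hk' := (hk.map ρ).eq
  have hlast' := congrArg ρ hlast
  simp only [_root_.map_mul, _root_.map_inv, map.of, Fin.lastCases_castSucc, Fin.lastCases_last, id_eq,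
    hρ, ρ] at hk' hlast'
  rw [hk', mul_inv_cancel_right] at hlast'
  exact mul_eq_left.mp hlast'.symm

namespace MulAut

variable {ι κ G : Type*} [Group G]

theorem exists_eq_conj_lift_of_mem_closure {y : ι → G} {f : MulAut G}
    (hf : f ∈ Subgroup.closure (Set.range fun i => conj (y i))) :
    ∃ v : FreeGroup ι, f = conj (lift y v) := by
  have hlift : lift (fun i => conj (y i)) = conj.comp (lift y) := ext_hom _ _ (by simp)
  rw [← range_lift_eq_closure, hlift] at hf
  obtain ⟨v, rfl⟩ := hf
  exact ⟨v, rfl⟩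

theorem lift_apply_eq_self (φ : ι → MulAut G) {g : G} (h : ∀ i, φ i g = g)
    (v : FreeGroup ι) : lift φ v g = g :=
  range_lift_le (s := MulAction.stabilizer (MulAut G) g) (Set.range_subset_iff.2 h) ⟨v, rfl⟩

theorem lift_apply_lift_eq_self (φ : ι → MulAut G) {y : κ → G}
    (h : ∀ i j, φ i (y j) = y j) (v : FreeGroup ι) (u : FreeGroup κ) :
    lift φ v (lift y u) = lift y u := by
  have hcomp : (lift φ v).toMonoidHom.comp (lift y) = lift y :=
    ext_hom _ _ fun j => by simpa using lift_apply_eq_self φ (fun i => h i j) v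
  exact DFunLike.congr_fun hcomp u

theorem lift_apply_eq_mul_lift (φ : ι → MulAut G) {y : ι → G} {c : G}
    (hy : ∀ i j, φ i (y j) = y j) (hc : ∀ i, φ i c = c * y i) (v : FreeGroup ι) :
    lift φ v c = c * lift y v := by
  induction v using FreeGroup.induction_on with
  | C1 => simp
  | of i => simpa using hc i
  | inv_of i _ =>
    rw [map_inv, map_inv, lift_apply_of, lift_apply_of, inv_apply, MulEquiv.symm_apply_eq,
      map_mul, map_inv, hc, hy]
    exact (mul_inv_cancel_right _ _).symm
  | mul a b ha hb =>
    rw [map_mul, mul_apply, hb, map_mul, ha, lift_apply_lift_eq_self φ hy, map_mul, mul_assoc]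

end MulAut

/-- With `⟨φ₁,φ₂⟩` a poison subgroup of `Aut(G)` with respect to
`x₁,x₂,x₃`, and `αᵢ` conjugation by `xᵢ`, any word in `φ₁, φ₂` lying in
`⟨α₁, α₂, α₃⟩` is the identity automorphism. -/
theorem stmt3 {G : Type} [Group G] (x : Fin 3 → G)
    (hx : Function.Injective (FreeGroup.lift x))
    (φ : Fin 2 → MulAut G)
    (hfix : ∀ i j : Fin 2, φ i (x j.castSucc) = x j.castSucc)
    (hx3 : ∀ i : Fin 2, φ i (x 2) = x 2 * x i.castSucc)
    (w : FreeGroup (Fin 2))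
    (hw : FreeGroup.lift φ w ∈
      Subgroup.closure (Set.range fun i : Fin 3 => MulAut.conj (x i))) :
    FreeGroup.lift φ w = 1 := by
  obtain ⟨v, hv⟩ := MulAut.exists_eq_conj_lift_of_mem_closure hw
  have hx0 : lift x (v * of 0) = lift x (of 0 * v) := by
    have h := MulAut.lift_apply_eq_self φ (fun i => hfix i 0) w
    rw [hv, MulAut.conj_apply, mul_inv_eq_iff_eq_mul] at h
    simpa using h
  have hx2 : lift x (v * of 2 * v⁻¹) = lift x (of 2 * map Fin.castSucc w) := by
    have h := MulAut.lift_apply_eq_mul_lift φ (y := x ∘ Fin.castSucc) hfix hx3 w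
    rw [hv, MulAut.conj_apply, ← FreeGroup.lift_map_apply] at h
    simpa using h
  rw [FreeGroup.eq_one_of_commute_castSucc_of_conj_last 0 (hx hx0) (hx hx2), map_one]
end

section
/- Let G be a group with a poison subgroup ⟨φ₁,φ₂⟩ of Aut(G) with respect to x₁, x₂, x₃, and let αᵢ denote conjugation by xᵢ. Then the subgroup ⟨α₁, α₂, α₃⟩ is normal in H = ⟨φ₁, φ₂, α₁, α₂, α₃⟩, and there is a split short exact sequence 1 → ⟨α₁,α₂,α₃⟩ → H → ⟨φ₁,φ₂⟩ → 1. -/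
/-!
`A` is the image under `MulAut.conj` of `N = ⟨x₁, x₂, x₃⟩`, and each `φᵢ` restricts to the
transvection `x₃ ↦ x₃ xᵢ` of `N`, so it maps `N` onto itself and hence normalizes `A`; thus
`H = A ⊔ Φ` with `A` normal in `H`. An element of `A ⊓ Φ` is conjugation by some `g ∈ N ≅ F₃`
fixing `x₁` and `x₂`, i.e. commuting with two distinct free generators, which forces `g = 1`.
So `Φ` is a complement of the normal subgroup `A` in `H`, and `H → H ⧸ A ≅ Φ` is split by the
inclusion of `Φ`.
-/

open Subgroup MulAction Set

theorem FreeGroup.eq_one_of_commute_of_ne {α : Type*} {i j : α} (hij : i ≠ j)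
    {w : FreeGroup α} (hi : Commute w (of i)) (hj : Commute w (of j)) : w = 1 := by
  classical
  -- Some `m ∈ {i, j}` differs from the first letter `k` of `w`. Then `of m * w` has the word
  -- `(m, true) :: w`, so `w * of m` is one letter longer than `w` and its word is
  -- `w ++ [(m, true)]`; comparing first letters gives `m = k`.
  by_contra hw
  obtain ⟨⟨k, e⟩, L, hL⟩ := List.exists_cons_of_ne_nil (mt toWord_eq_nil_iff.mp hw)
  obtain ⟨m, hm, hmk⟩ : ∃ m, Commute w (of m) ∧ m ≠ k := by
    by_cases hik : i = k
    · exact ⟨j, hj, fun hjk => hij (hik.trans hjk.symm)⟩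
    · exact ⟨i, hi, hik⟩
  have hleft : (of m * w).toWord = (m, true) :: w.toWord := by
    rw [toWord_mul, toWord_of, List.singleton_append, reduce.cons, reduce_toWord, hL]
    simp [hmk]
  have hright : (w * of m).toWord = w.toWord ++ [(m, true)] :=
    (toWord_of m ▸ toWord_mul_sublist w (of m)).eq_of_length (by simp [hm.eq, hleft])
  have := hright.symm.trans (hm.eq ▸ hleft)
  rw [hL, List.cons_append, List.cons.injEq, Prod.mk.injEq] at this
  exact hmk this.1.1.symm

namespace Subgroup

variable {K : Type*} [Group K] {A Φ H : Subgroup K}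

theorem normal_subgroupOf_of_sup_eq (hH : A ⊔ Φ = H) (hΦ : Φ ≤ normalizer (A : Set K)) :
    (A.subgroupOf H).Normal :=
  (normal_subgroupOf_iff_le_normalizer (hH ▸ le_sup_left)).mpr (hH ▸ sup_le le_normalizer hΦ)

theorem isComplement'_subgroupOf_of_sup_eq (hH : A ⊔ Φ = H) (hΦ : Φ ≤ normalizer (A : Set K))
    (hdisj : Disjoint A Φ) : (Φ.subgroupOf H).IsComplement' (A.subgroupOf H) := by
  have := normal_subgroupOf_of_sup_eq hH hΦ
  refine isComplement'_of_disjoint_and_mul_eq_univ ?_ ?_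
  · exact disjoint_def.mpr fun hxΦ hxA => Subtype.ext (disjoint_def.mp hdisj hxA hxΦ)
  · rw [← mul_normal, ← subgroupOf_sup (hH ▸ le_sup_right) (hH ▸ le_sup_left), sup_comm, hH,
      subgroupOf_self, coe_top]

theorem exists_splitting_of_sup_eq (hH : A ⊔ Φ = H) (hΦ : Φ ≤ normalizer (A : Set K))
    (hdisj : Disjoint A Φ) :
    ∃ (π : H →* Φ) (s : Φ →* H), Function.Surjective π ∧ π.ker = A.subgroupOf H ∧
      π.comp s = MonoidHom.id Φ := by
  have hΦH : Φ ≤ H := hH ▸ le_sup_right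
  have := normal_subgroupOf_of_sup_eq hH hΦ
  let e : H ⧸ A.subgroupOf H ≃* Φ :=
    (isComplement'_subgroupOf_of_sup_eq hH hΦ hdisj).QuotientMulEquiv.trans
      (subgroupOfEquivOfLe hΦH)
  refine ⟨e.toMonoidHom.comp (QuotientGroup.mk' _), inclusion hΦH,
    e.surjective.comp (QuotientGroup.mk'_surjective _), ?_, ?_⟩
  · ext z
    simp
  · ext φ : 1
    exact e.eq_symm_apply.mp rfl

end Subgroup

section

variable {G : Type*} [Group G]

theorem mem_normalizer_map_conj_of_map_eq {ψ : MulAut G} {N : Subgroup G}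
    (h : N.map (ψ : G →* G) = N) :
    ψ ∈ normalizer ((N.map MulAut.conj : Subgroup (MulAut G)) : Set (MulAut G)) := by
  have hconj : ((MulAut.conj ψ : MulAut (MulAut G)) : MulAut G →* MulAut G).comp MulAut.conj =
      MulAut.conj.comp (ψ : G →* G) :=
    MonoidHom.ext fun g => MulEquiv.ext fun y => by simp
  rw [mem_normalizer_iff_map_conj_eq, map_map, hconj, ← map_map, h]

theorem map_closure_range_eq_of_transvection {x : Fin 3 → G} {ψ : MulAut G} {i : Fin 2}
    (hfix : ∀ j : Fin 2, ψ (x j.castSucc) = x j.castSucc) (hx2 : ψ (x 2) = x 2 * x i.castSucc) :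
    (closure (range x)).map (ψ : G →* G) = closure (range x) := by
  have hx : ∀ j, x j ∈ closure (range x) := fun j => subset_closure ⟨j, rfl⟩
  have hx0 : ψ (x 0) = x 0 := hfix 0
  have hx1 : ψ (x 1) = x 1 := hfix 1
  apply le_antisymm
  · rw [map_le_iff_le_comap, closure_le]
    rintro _ ⟨j, rfl⟩
    fin_cases j
    · simpa [hx0] using hx 0
    · simpa [hx1] using hx 1
    · simpa [hx2] using mul_mem (hx 2) (hx i.castSucc)
  · rw [closure_le]
    rintro _ ⟨j, rfl⟩
    fin_cases j
    · exact ⟨x 0, hx 0, hx0⟩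
    · exact ⟨x 1, hx 1, hx1⟩
    · exact ⟨x 2 * (x i.castSucc)⁻¹, mul_mem (hx 2) (inv_mem (hx _)), by simp [hx2, hfix]⟩

theorem disjoint_map_conj_stabilizer {α : Type*} {x : α → G}
    (hx : Function.Injective (FreeGroup.lift x)) {i j : α} (hij : i ≠ j) :
    Disjoint ((closure (range x)).map MulAut.conj)
      (stabilizer (MulAut G) (x i) ⊓ stabilizer (MulAut G) (x j)) := by
  refine disjoint_def.mpr fun {ψ} hA hfix => ?_
  obtain ⟨g, hg, rfl⟩ := mem_map.mp hA
  rw [← FreeGroup.range_lift_eq_closure] at hg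
  obtain ⟨w, rfl⟩ := hg
  have hcomm : ∀ k, MulAut.conj (FreeGroup.lift x w) ∈ stabilizer (MulAut G) (x k) →
      Commute w (FreeGroup.of k) := fun k hk =>
    hx (by simpa [mem_stabilizer_iff, MulAut.smul_def, mul_inv_eq_iff_eq_mul] using hk)
  rw [FreeGroup.eq_one_of_commute_of_ne hij (hcomm i hfix.1) (hcomm j hfix.2), map_one,
    map_one]

end

/-- With `⟨φ₁,φ₂⟩` a poison subgroup of `Aut(G)` with respect to
`x₁,x₂,x₃` and `αᵢ = conj(xᵢ)`, the subgroup `A = ⟨α₁,α₂,α₃⟩` is normal in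
`H = ⟨φ₁,φ₂,α₁,α₂,α₃⟩` and there is a split short exact sequence
`1 → A → H → ⟨φ₁,φ₂⟩ → 1`. -/
theorem stmt4 {G : Type} [Group G] (x : Fin 3 → G)
    (hx : Function.Injective (FreeGroup.lift x))
    (φ : Fin 2 → MulAut G)
    (hfix : ∀ i j : Fin 2, φ i (x j.castSucc) = x j.castSucc)
    (hx3 : ∀ i : Fin 2, φ i (x 2) = x 2 * x i.castSucc) :
    ∀ (A H Φ : Subgroup (MulAut G)),
      A = Subgroup.closure (Set.range fun i : Fin 3 => MulAut.conj (x i)) →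
      Φ = Subgroup.closure (Set.range φ) →
      H = Subgroup.closure (Set.range φ ∪ (Set.range fun i : Fin 3 => MulAut.conj (x i))) →
      A ≤ H ∧ (A.subgroupOf H).Normal ∧
        ∃ (π : ↥H →* ↥Φ) (s : ↥Φ →* ↥H),
          Function.Surjective π ∧ π.ker = A.subgroupOf H ∧
            π.comp s = MonoidHom.id ↥Φ := by
  intro A H Φ hA hΦ hH
  have hAN : A = (closure (range x)).map MulAut.conj := by
    rw [hA, MonoidHom.map_closure, ← range_comp]
    rfl
  have hΦA : Φ ≤ normalizer (A : Set (MulAut G)) := hΦ ▸ (closure_le _).mpr (by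
    rintro _ ⟨k, rfl⟩
    exact hAN ▸ mem_normalizer_map_conj_of_map_eq
      (map_closure_range_eq_of_transvection (hfix k) (hx3 k)))
  have hΦfix : Φ ≤ stabilizer (MulAut G) (x 0) ⊓ stabilizer (MulAut G) (x 1) :=
    hΦ ▸ (closure_le _).mpr (by
      rintro _ ⟨k, rfl⟩
      exact ⟨by simpa using hfix k 0, by simpa using hfix k 1⟩)
  have hsup : A ⊔ Φ = H := by rw [hA, hΦ, hH, ← Subgroup.closure_union, union_comm]
  have hdisj : Disjoint A Φ := (hAN ▸ disjoint_map_conj_stabilizer hx (by decide)).mono_right hΦfix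
  exact ⟨hsup ▸ le_sup_left, normal_subgroupOf_of_sup_eq hsup hΦA,
    exists_splitting_of_sup_eq hsup hΦA hdisj⟩
end

section
/- Let G be a linear group (a subgroup of GL_N(k) for a field k) and let H be a normal subgroup of G that is closed in the Zariski topology induced on G. Then G/H is linear. -/
/-!
Chevalley's argument. The polynomials in the matrix entries vanishing on `H` form a finitely
generated ideal `J`; if `d` bounds the degrees of its generators, then `H` is exactly the
stabilizer in `G` of `J ∩ k[X]_{≤ d}` inside the finite-dimensional space `k[X]_{≤ d}`, on which
`G` acts by right translation `f(X) ↦ f(X g)`. Replacing this subspace by the line spanned by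
its top exterior power, `H` becomes the stabilizer of a line `k ω`. As `H` is normal, `G` permutes
the weight spaces of `H`, hence acts on their sum `V'` and, by conjugation, on the centralizer
`E` of `H` in `End V'`. Then `H` acts trivially on `E`; conversely an element acting trivially
commutes with the rank-one map `x ↦ l x • ω`, where `l` is an `H`-eigenform with `l ω ≠ 0`, so it
fixes the line `k ω` and lies in `H`. Thus `G ⧸ H` acts faithfully on `E`.
-/

/-- A group is linear if it embeds in `GL_n(k)` for some field `k` and some `n`. -/
def IsLinearGroup (G : Type*) [Group G] : Prop :=
  ∃ (k : Type) (_ : Field k) (n : ℕ) (ρ : G →* Matrix.GeneralLinearGroup (Fin n) k),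
    Function.Injective ρ

open Module Submodule Set

theorem isLinearGroup_quotient_of_forall_eq_one_iff {k : Type} [Field k] {Γ V : Type*} [Group Γ]
    [AddCommGroup V] [Module k V] [FiniteDimensional k V] (ρ : Representation k Γ V)
    (H : Subgroup Γ) [H.Normal] (hker : ∀ g, ρ g = 1 ↔ g ∈ H) : IsLinearGroup (Γ ⧸ H) := by
  let φ : Γ →* Matrix.GeneralLinearGroup (Fin (finrank k V)) k :=
    (Matrix.GeneralLinearGroup.toLin' (finBasis k V)).symm.toMonoidHom.comp ρ.asGroupHom
  have hφ : φ.ker = H := by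
    rw [MonoidHom.ker_comp_of_injective _ _ (MulEquiv.injective _)]
    ext g
    rw [MonoidHom.mem_ker, ← hker, Units.ext_iff]
    rfl
  exact ⟨k, inferInstance, _, (QuotientGroup.kerLift φ).comp
    (QuotientGroup.quotientMulEquivOfEq hφ.symm).toMonoidHom,
    (QuotientGroup.kerLift_injective φ).comp (MulEquiv.injective _)⟩

theorem Module.End.iSupIndep_iInf_eigenspace {ι K V : Type*} [Field K] [AddCommGroup V]
    [Module K V] (f : ι → End K V) :
    iSupIndep fun χ : ι → K => ⨅ i, (f i).eigenspace (χ i) := by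
  classical
  set E := fun χ : ι → K => ⨅ i, (f i).eigenspace (χ i)
  have mem_E (χ : ι → K) (v : V) : v ∈ E χ ↔ ∀ i, f i v = χ i • v := by
    simp [E]
  suffices ∀ χ (s : Finset (ι → K)), χ ∉ s → Disjoint (E χ) (s.sup E) by
    simpa only [iSupIndep_iff_supIndep, Finset.supIndep_iff_disjoint_erase] using
      fun s χ _ => this _ _ (s.notMem_erase χ)
  intro χ s
  induction s using Finset.induction_on with
  | empty => simp
  | insert χ₂ s _ ih =>
    intro hχ
    rw [Finset.mem_insert, not_or] at hχ
    obtain ⟨i, hi⟩ := Function.ne_iff.1 hχ.1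
    have hstable : s.sup E ≤ (s.sup E).comap (f i) := Finset.sup_le fun χ' hχ' v hv => by
      rw [mem_comap, (mem_E χ' v).1 hv i]
      exact smul_mem _ _ (Finset.le_sup (f := E) hχ' hv)
    rw [Finset.sup_insert, Submodule.disjoint_def]
    intro x hx hx'
    obtain ⟨y, hy, z, hz, rfl⟩ := Submodule.mem_sup.1 hx'
    -- `f i - χ₂ i` kills `y`, preserves `s.sup E` and multiplies `y + z` by `χ i - χ₂ i ≠ 0`.
    have hscaled : (χ i - χ₂ i) • (y + z) = f i z - χ₂ i • z := by
      rw [sub_smul, ← (mem_E χ _).1 hx i, map_add, (mem_E χ₂ y).1 hy i, smul_add]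
      abel
    have hmem : (χ i - χ₂ i) • (y + z) ∈ s.sup E :=
      hscaled ▸ sub_mem (hstable hz) (smul_mem _ _ hz)
    have hzero := Submodule.disjoint_def.1 (ih hχ.2) _ (smul_mem _ _ hx) hmem
    exact (smul_eq_zero.1 hzero).resolve_left (sub_ne_zero.2 hi)

@[simp]
theorem Subrepresentation.toRepresentation_apply_coe {k G W : Type*} [Semiring k] [Monoid G]
    [AddCommMonoid W] [Module k W] {ρ : Representation k G W} (σ : Subrepresentation ρ) (g : G)
    (w : σ.toSubmodule) : (σ.toRepresentation g w : W) = ρ g w :=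
  rfl

namespace Representation

variable {k Γ V U : Type*} [Field k] [Group Γ] [AddCommGroup V] [Module k V]
  [AddCommGroup U] [Module k U] (ρ : Representation k Γ V) (H : Subgroup Γ)

def weightSpace (χ : H → k) : Submodule k V := ⨅ h : H, Module.End.eigenspace (ρ h) (χ h)

variable {ρ H} in
theorem mem_weightSpace {χ : H → k} {v : V} :
    v ∈ ρ.weightSpace H χ ↔ ∀ h : H, ρ h v = χ h • v := by
  simp [weightSpace]

theorem iSupIndep_weightSpace : iSupIndep (ρ.weightSpace H) :=
  Module.End.iSupIndep_iInf_eigenspace _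

variable {ρ H} in
theorem apply_mem_weightSpace [H.Normal] (g : Γ) {χ : H → k} {v : V}
    (hv : v ∈ ρ.weightSpace H χ) : ρ g v ∈ ρ.weightSpace H (χ ∘ MulAut.conjNormal g⁻¹) := by
  refine mem_weightSpace.2 fun h => ?_
  have hconj : (h : Γ) * g = g * (MulAut.conjNormal g⁻¹ h : H) := by simp [mul_assoc]
  rw [← Module.End.mul_apply, ← map_mul, hconj, map_mul, Module.End.mul_apply,
    mem_weightSpace.1 hv, map_smul, Function.comp_apply]

def weightSubrepresentation [H.Normal] : Subrepresentation ρ where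
  toSubmodule := ⨆ χ, ρ.weightSpace H χ
  apply_mem_toSubmodule g := (iSup_le fun _ _ hv =>
    mem_comap.2 (le_iSup (ρ.weightSpace H) _ (apply_mem_weightSpace g hv)) : _ ≤ comap (ρ g) _)

variable {ρ H} in
theorem exists_dual_equivariant_of_mem_weightSpace {χ : H → k} {ω : V}
    (hω : ω ∈ ρ.weightSpace H χ) (hω0 : ω ≠ 0) :
    ∃ l : Dual k V, l ω ≠ 0 ∧
      ∀ h : H, ∀ x ∈ ⨆ χ', ρ.weightSpace H χ', l (ρ h x) = χ h * l x := by
  have hωO : ω ∉ ⨆ (χ' : H → k) (_ : χ' ≠ χ), ρ.weightSpace H χ' :=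
    fun hωO => hω0 (disjoint_def.1 (ρ.iSupIndep_weightSpace H χ) ω hω hωO)
  obtain ⟨l, hlω, hlO⟩ := exists_dual_map_eq_bot_of_notMem hωO inferInstance
  refine ⟨l, hlω, fun h x hx => ?_⟩
  suffices (⨆ χ', ρ.weightSpace H χ') ≤ LinearMap.ker (l ∘ₗ ρ h - χ h • l) by
    simpa [sub_eq_zero] using this hx
  refine iSup_le fun χ' y hy => ?_
  rw [LinearMap.mem_ker, LinearMap.sub_apply, LinearMap.comp_apply, mem_weightSpace.1 hy h]
  obtain rfl | hχ' := eq_or_ne χ' χ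
  · simp
  · have hO : ρ.weightSpace H χ' ≤ ⨆ (χ' : H → k) (_ : χ' ≠ χ), ρ.weightSpace H χ' :=
      le_iSup₂_of_le χ' hχ' le_rfl
    simp [LinearMap.mem_ker.1 (LinearMap.le_ker_iff_map.2 hlO (hO hy))]

variable (σ : Representation k Γ U)

def centralizerSubrepresentation [H.Normal] : Subrepresentation (linHom σ σ) where
  toSubmodule := Subalgebra.toSubmodule (Subalgebra.centralizer k (σ '' H))
  apply_mem_toSubmodule g φ hφ := by
    simp only [Subalgebra.mem_toSubmodule, Subalgebra.mem_centralizer_iff, forall_mem_image,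
      SetLike.mem_coe, linHom_apply] at hφ ⊢
    intro h hh
    have hconj := hφ (by simpa using ‹H.Normal›.conj_mem h hh g⁻¹ : g⁻¹ * h * g ∈ H)
    ext x
    simpa using congr(σ g ($hconj (σ g⁻¹ x)))

variable {σ H}

theorem mem_centralizerSubrepresentation [H.Normal] {φ : U →ₗ[k] U} :
    φ ∈ σ.centralizerSubrepresentation H ↔ ∀ h ∈ H, σ h * φ = φ * σ h := by
  change φ ∈ Subalgebra.centralizer k _ ↔ _
  simp [Subalgebra.mem_centralizer_iff]

theorem centralizerSubrepresentation_apply_of_mem [H.Normal] {h : Γ} (hh : h ∈ H) :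
    (σ.centralizerSubrepresentation H).toRepresentation h = 1 := by
  ext ⟨φ, hφ⟩ x
  simpa using congr($(mem_centralizerSubrepresentation.1 hφ h hh) (σ h⁻¹ x))

theorem commute_of_centralizerSubrepresentation_apply_eq_one [H.Normal] {g : Γ}
    (hg : (σ.centralizerSubrepresentation H).toRepresentation g = 1) {φ : U →ₗ[k] U}
    (hφ : φ ∈ σ.centralizerSubrepresentation H) : σ g * φ = φ * σ g := by
  have := congr(($hg ⟨φ, hφ⟩ : U →ₗ[k] U))
  ext x
  simpa using congr($this (σ g x))

end Representation

open Representation in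
theorem isLinearGroup_quotient_of_forall_mem_iff_mem_span_singleton {k : Type} [Field k]
    {Γ V : Type*} [Group Γ] [AddCommGroup V] [Module k V] [FiniteDimensional k V]
    (ρ : Representation k Γ V) (H : Subgroup Γ) [H.Normal] (ω : V)
    (hH : ∀ g, g ∈ H ↔ ρ g ω ∈ k ∙ ω) : IsLinearGroup (Γ ⧸ H) := by
  set V' := ρ.weightSubrepresentation H
  set E := V'.toRepresentation.centralizerSubrepresentation H
  refine isLinearGroup_quotient_of_forall_eq_one_iff (k := k) (V := E.toSubmodule)
    E.toRepresentation H fun g => ⟨fun hg => ?_, centralizerSubrepresentation_apply_of_mem⟩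
  choose χ hχ using fun h : H => mem_span_singleton.1 ((hH h).1 h.2)
  have hω : ω ∈ ρ.weightSpace H χ := mem_weightSpace.2 fun h => (hχ h).symm
  obtain rfl | hω0 := eq_or_ne ω 0
  · simpa using (hH g).2 (by simp)
  obtain ⟨l, hlω, hl⟩ := exists_dual_equivariant_of_mem_weightSpace hω hω0
  -- The rank-one map `x ↦ l x • ω` on `V'` commutes with `H`, hence with `ρ g`.
  let ω' : V'.toSubmodule := ⟨ω, le_iSup (ρ.weightSpace H) χ hω⟩
  let φ : V'.toSubmodule →ₗ[k] V'.toSubmodule := (l ∘ₗ V'.toSubmodule.subtype).smulRight ω'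
  have hφ : φ ∈ V'.toRepresentation.centralizerSubrepresentation H :=
    mem_centralizerSubrepresentation.2 fun h hh => by
      ext x
      simp [φ, ω', hl ⟨h, hh⟩ x x.2, mem_weightSpace.1 hω ⟨h, hh⟩, smul_smul, mul_comm]
  have hcomm : l ω • ρ g ω = l (ρ g ω) • ω := by
    simpa [φ, ω'] using
      congr(($(commute_of_centralizerSubrepresentation_apply_eq_one hg hφ) ω' : V))
  rw [hH, mem_span_singleton]
  exact ⟨(l ω)⁻¹ * l (ρ g ω), by rw [mul_smul, ← hcomm, inv_smul_smul₀ hlω]⟩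

namespace exteriorPower

variable {K E : Type*} [Field K] [AddCommGroup E] [Module K E] {n : ℕ}

theorem ιMulti_ne_zero_of_linearIndependent {v : Fin n → E} (hv : LinearIndependent K v) :
    ιMulti K n v ≠ 0 := by
  simpa [ιMulti_family] using (ιMulti_family_linearIndependent_field (n := n) hv).ne_zero
    (powersetCard.ofFinEmbEquiv (RelEmbedding.refl (· ≤ ·)))

theorem ιMulti_mem_span_singleton {v w : Fin n → E} (hv : LinearIndependent K v)
    (hw : ∀ i, w i ∈ span K (range v)) : ιMulti K n w ∈ K ∙ ιMulti K n v := by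
  set P := span K (range v)
  let b : Basis (Fin n) K P := .span hv
  have : Module.Finite K P := .of_basis b
  have hrank : finrank K (⋀[K]^n P) = 1 := by
    rw [finrank_eq, finrank_eq_card_basis b, Fintype.card_fin, Nat.choose_self]
  obtain ⟨c, hc⟩ := (finrank_eq_one_iff_of_nonzero' _
    (ιMulti_ne_zero_of_linearIndependent b.linearIndependent)).1 hrank
    (ιMulti K n fun i => ⟨w i, hw i⟩)
  have hb : P.subtype ∘ b = v := funext fun i => congrArg Subtype.val (Basis.span_apply hv i)
  refine mem_span_singleton.2 ⟨c, ?_⟩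
  simpa [← hb, Function.comp_def] using congr(map n P.subtype $hc)

end exteriorPower

namespace ExteriorAlgebra

variable {K E : Type*} [Field K] [AddCommGroup E] [Module K E] {n : ℕ}

theorem ιMulti_eq_zero_iff {v : Fin n → E} :
    ιMulti K n v = 0 ↔ ¬ LinearIndependent K v := by
  refine ⟨fun h hv => exteriorPower.ιMulti_ne_zero_of_linearIndependent hv ?_,
    (ιMulti K n).map_linearDependent v⟩
  exact Subtype.ext h

theorem ιMulti_cons_eq_zero_iff {v : Fin n → E} (hv : LinearIndependent K v) (x : E) :
    ιMulti K (n + 1) (Fin.cons x v) = 0 ↔ x ∈ span K (range v) := by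
  rw [ιMulti_eq_zero_iff, linearIndependent_finCons, not_and_not_right]
  exact ⟨fun h => h hv, fun h _ => h⟩

end ExteriorAlgebra

namespace exteriorPower

variable {K E : Type*} [Field K] [AddCommGroup E] [Module K E] {n : ℕ}

theorem le_comap_iff_map_ιMulti_mem_span_singleton {v : Fin n → E} (hv : LinearIndependent K v)
    {f : E →ₗ[K] E} (hf : Function.Injective f) :
    span K (range v) ≤ (span K (range v)).comap f ↔
      map n f (ιMulti K n v) ∈ K ∙ ιMulti K n v := by
  rw [map_apply_ιMulti]
  refine ⟨fun hP => ιMulti_mem_span_singleton hv fun i => hP (subset_span ⟨i, rfl⟩),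
    fun hfv x hx => ?_⟩
  obtain ⟨a, ha⟩ := mem_span_singleton.1 hfv
  have ha0 : a ≠ 0 := by
    rintro rfl
    refine ιMulti_ne_zero_of_linearIndependent (hv.map' f (LinearMap.ker_eq_bot.2 hf)) ?_
    rw [← ha, zero_smul]
  -- `a • (f x ∧ v₁ ∧ ⋯ ∧ vₙ) = f x ∧ f v₁ ∧ ⋯ ∧ f vₙ` is the image of `x ∧ v₁ ∧ ⋯ ∧ vₙ = 0`.
  have key : a • ExteriorAlgebra.ιMulti K (n + 1) (Fin.cons (f x) v) =
      ExteriorAlgebra.map f (ExteriorAlgebra.ιMulti K (n + 1) (Fin.cons x v)) := by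
    rw [ExteriorAlgebra.map_apply_ιMulti, ExteriorAlgebra.ιMulti_succ_apply,
      ExteriorAlgebra.ιMulti_succ_apply, ← mul_smul_comm]
    simpa [Matrix.vecTail, Function.comp_def] using congr(ExteriorAlgebra.ι K (f x) * $ha)
  rw [(ExteriorAlgebra.ιMulti_cons_eq_zero_iff hv x).2 hx, map_zero, smul_eq_zero] at key
  exact (ExteriorAlgebra.ιMulti_cons_eq_zero_iff hv (f x)).1 (key.resolve_left ha0)

end exteriorPower

namespace Representation

variable {k Γ V : Type*} [Field k] [Group Γ] [AddCommGroup V] [Module k V]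

noncomputable def exteriorPower (ρ : Representation k Γ V) (n : ℕ) :
    Representation k Γ (⋀[k]^n V) where
  toFun g := _root_.exteriorPower.map n (ρ g)
  map_one' := by rw [map_one]; exact _root_.exteriorPower.map_id
  map_mul' g h := by simp [Module.End.mul_eq_comp, _root_.exteriorPower.map_comp]

end Representation

theorem isLinearGroup_quotient_of_forall_mem_iff_le_comap {k : Type} [Field k]
    {Γ V : Type*} [Group Γ] [AddCommGroup V] [Module k V] [FiniteDimensional k V]
    (ρ : Representation k Γ V) (H : Subgroup Γ) [H.Normal] (P : Submodule k V)
    (hH : ∀ g, g ∈ H ↔ P ≤ P.comap (ρ g)) : IsLinearGroup (Γ ⧸ H) := by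
  let b := finBasis k P
  have hv : LinearIndependent k (P.subtype ∘ b) := b.linearIndependent.map' _ P.ker_subtype
  have hspan : span k (range (P.subtype ∘ b)) = P := by
    rw [range_comp, ← map_span, b.span_eq, map_subtype_top]
  refine isLinearGroup_quotient_of_forall_mem_iff_mem_span_singleton (ρ.exteriorPower _) H
    (exteriorPower.ιMulti k _ (P.subtype ∘ b)) fun g => ?_
  have key := exteriorPower.le_comap_iff_map_ιMulti_mem_span_singleton hv
    (ρ.apply_bijective g).injective
  rw [hspan] at key
  exact (hH g).trans key

namespace MvPolynomial

variable {R m : Type*} [CommRing R] [Fintype m]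

theorem totalDegree_aeval_le_of_isHomogeneous_one {σ τ : Type*} {g : σ → MvPolynomial τ R}
    (hg : ∀ i, (g i).IsHomogeneous 1) (f : MvPolynomial σ R) :
    (aeval g f).totalDegree ≤ f.totalDegree := by
  conv_lhs => rw [← sum_homogeneousComponent f]
  rw [map_sum]
  refine (totalDegree_finsetSum _ _).trans (Finset.sup_le fun i hi => ?_)
  refine ((homogeneousComponent_isHomogeneous i f).aeval g hg).totalDegree_le.trans ?_
  simpa [Nat.lt_succ_iff] using hi

noncomputable def rightTranslate (A : Matrix m m R) :
    MvPolynomial (m × m) R →ₐ[R] MvPolynomial (m × m) R :=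
  aeval fun ij => ∑ l, A l ij.2 • X (ij.1, l)

@[simp]
theorem rightTranslate_X (A : Matrix m m R) (i j : m) :
    rightTranslate A (X (i, j)) = ∑ l, A l j • X (i, l) :=
  aeval_X _ _

theorem rightTranslate_one [DecidableEq m] :
    rightTranslate (1 : Matrix m m R) = AlgHom.id R _ := by
  ext ⟨i, j⟩ : 1
  simp [Matrix.one_apply]

theorem rightTranslate_mul (A B : Matrix m m R) :
    rightTranslate (A * B) = (rightTranslate A).comp (rightTranslate B) := by
  ext ⟨i, j⟩ : 1
  simp [Matrix.mul_apply, Finset.sum_smul, Finset.smul_sum, smul_smul, mul_comm]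
  exact Finset.sum_comm

theorem eval_rightTranslate (M A : Matrix m m R) (f : MvPolynomial (m × m) R) :
    eval (fun ij => M ij.1 ij.2) (rightTranslate A f) = eval (fun ij => (M * A) ij.1 ij.2) f := by
  have : (aeval fun ij => M ij.1 ij.2).comp (rightTranslate A) =
      aeval fun ij => (M * A) ij.1 ij.2 := by
    ext ⟨i, j⟩ : 1
    simp [Matrix.mul_apply, mul_comm]
  simpa using congr($this f)

theorem totalDegree_rightTranslate_le (A : Matrix m m R) (f : MvPolynomial (m × m) R) :
    (rightTranslate A f).totalDegree ≤ f.totalDegree :=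
  totalDegree_aeval_le_of_isHomogeneous_one (fun _ => IsHomogeneous.sum _ _ _ fun l _ => by
    simpa [smul_eq_C_mul] using isHomogeneous_C_mul_X (A l _) _) f

variable (R m) [DecidableEq m]

noncomputable def rightTranslation : Representation R (GL m R) (MvPolynomial (m × m) R) where
  toFun g := (rightTranslate (g : Matrix m m R)).toLinearMap
  map_one' := by simp [rightTranslate_one]; rfl
  map_mul' g h := by simp [rightTranslate_mul]; rfl

theorem rightTranslation_apply (g : GL m R) (f : MvPolynomial (m × m) R) :
    rightTranslation R m g f = rightTranslate (g : Matrix m m R) f :=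
  rfl

noncomputable def rightTranslationRestrictTotalDegree (d : ℕ) :
    Subrepresentation (rightTranslation R m) where
  toSubmodule := restrictTotalDegree (m × m) R d
  apply_mem_toSubmodule g f hf := by
    rw [mem_restrictTotalDegree] at hf ⊢
    exact (totalDegree_rightTranslate_le _ _).trans hf

variable {R m}

instance {k : Type*} [Field k] (d : ℕ) :
    FiniteDimensional k (rightTranslationRestrictTotalDegree k m d).toSubmodule :=
  inferInstanceAs (FiniteDimensional k (restrictTotalDegree (m × m) k d))

theorem exists_forall_mem_iff_le_comap {k : Type*} [Field k]
    {G : Subgroup (GL m k)} (H : Subgroup G) (S : Set (MvPolynomial (m × m) k))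
    (hS : ∀ g : G, g ∈ H ↔
      ∀ p ∈ S, eval (fun ij => ((g : GL m k) : Matrix m m k) ij.1 ij.2) p = 0) :
    ∃ (d : ℕ) (P : Submodule k (rightTranslationRestrictTotalDegree k m d).toSubmodule),
      ∀ g : G,
        g ∈ H ↔ P ≤ P.comap ((rightTranslationRestrictTotalDegree k m d).toRepresentation g) := by
  set pt : G → m × m → k := fun g ij => ((g : GL m k) : Matrix m m k) ij.1 ij.2
  set J := vanishingIdeal k (pt '' H)
  have mem_J (p : MvPolynomial (m × m) k) : p ∈ J ↔ ∀ h ∈ H, eval (pt h) p = 0 := by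
    rw [mem_vanishingIdeal_iff, Set.forall_mem_image]
    simp
  obtain ⟨T, hT⟩ := (IsNoetherian.noetherian J : J.FG)
  refine ⟨T.sup totalDegree, (J.restrictScalars k).comap (Submodule.subtype _),
    fun g => ⟨fun hg f hf => ?_, fun hg => (hS g).2 fun p hp => ?_⟩⟩
  · simp only [Submodule.mem_comap, subtype_apply, restrictScalars_mem,
      Subrepresentation.toRepresentation_apply_coe, rightTranslation_apply, mem_J] at hf ⊢
    intro h hh
    simpa [eval_rightTranslate, pt] using hf (h * g) (H.mul_mem hh hg)
  · have hJ : J ≤ RingHom.ker (eval (pt g)) := by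
      rw [← hT, Ideal.span_le]
      intro t ht
      have htW : t ∈ (rightTranslationRestrictTotalDegree k m (T.sup totalDegree)).toSubmodule :=
        (mem_restrictTotalDegree _ _ _).2 (Finset.le_sup ht)
      have htJ : rightTranslate ((g : GL m k) : Matrix m m k) t ∈ J :=
        hg (x := ⟨t, htW⟩) (hT ▸ subset_span ht)
      simpa [eval_rightTranslate, pt] using (mem_J _).1 htJ 1 H.one_mem
    exact hJ ((mem_J p).2 fun h hh => (hS h).1 hh p hp)

end MvPolynomial

/-- If `G ≤ GL_n(k)` and `H` is a normal subgroup of `G` which is closed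
in the Zariski topology induced on `G` (i.e. `H` is cut out in `G` by polynomial
equations in the matrix entries), then `G/H` is linear. -/
theorem stmt8 {k : Type} [Field k] {n : ℕ} (G : Subgroup (Matrix.GeneralLinearGroup (Fin n) k))
    (H : Subgroup ↥G) (hH : H.Normal)
    (hclosed : ∃ S : Set (MvPolynomial (Fin n × Fin n) k), ∀ g : ↥G,
      g ∈ H ↔ ∀ p ∈ S,
        MvPolynomial.eval
          (fun ij => ((g : Matrix.GeneralLinearGroup (Fin n) k) :
              Matrix (Fin n) (Fin n) k) ij.1 ij.2) p = 0) :
    IsLinearGroup (↥G ⧸ H) := by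
  obtain ⟨S, hS⟩ := hclosed
  obtain ⟨d, P, hP⟩ := MvPolynomial.exists_forall_mem_iff_le_comap H S hS
  exact isLinearGroup_quotient_of_forall_mem_iff_le_comap
    ((MvPolynomial.rightTranslationRestrictTotalDegree k (Fin n) d).toRepresentation.comp
      G.subtype) H P hP
end

section
/- Let G be a group and let Z = Z(G) be the center of G. If G is linear, then G/Z(G) is linear (equivalently, if G/Z is not linear, then G is not linear). -/
set_option maxHeartbeats 1000000
set_option synthInstance.maxHeartbeats 400000

section Aux

variable {G : Type} [Group G] {k : Type} [Field k] {n : ℕ}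
variable (ρ : G →* Matrix.GeneralLinearGroup (Fin n) k)

/-- The subalgebra of matrices generated by the image of `ρ`. -/
noncomputable def stmt10.Asub : Subalgebra k (Matrix (Fin n) (Fin n) k) :=
  Algebra.adjoin k (Set.range fun g => (ρ g : Matrix (Fin n) (Fin n) k))

namespace stmt10

lemma mem_Asub (g : G) : (ρ g : Matrix (Fin n) (Fin n) k) ∈ Asub ρ :=
  Algebra.subset_adjoin ⟨g, rfl⟩

lemma inv_mul_coe (g : G) :
    (ρ g⁻¹ : Matrix (Fin n) (Fin n) k) * (ρ g : Matrix (Fin n) (Fin n) k) = 1 := by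
  rw [← Units.val_mul, ← map_mul, inv_mul_cancel, map_one, Units.val_one]

lemma mul_inv_coe (g : G) :
    (ρ g : Matrix (Fin n) (Fin n) k) * (ρ g⁻¹ : Matrix (Fin n) (Fin n) k) = 1 := by
  rw [← Units.val_mul, ← map_mul, mul_inv_cancel, map_one, Units.val_one]

lemma conj_mem (g : G) {x : Matrix (Fin n) (Fin n) k} (hx : x ∈ Asub ρ) :
    (ρ g : Matrix (Fin n) (Fin n) k) * x * (ρ g⁻¹ : Matrix (Fin n) (Fin n) k) ∈ Asub ρ := by
  induction hx using Algebra.adjoin_induction with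
  | mem y hy =>
      obtain ⟨h, rfl⟩ := hy
      have : (ρ g : Matrix (Fin n) (Fin n) k) * (ρ h) * (ρ g⁻¹ : Matrix (Fin n) (Fin n) k) =
          ((ρ (g * h * g⁻¹) : Matrix (Fin n) (Fin n) k)) := by
        simp [map_mul, Units.val_mul]
      rw [this]
      exact mem_Asub ρ _
  | algebraMap r =>
      have : (ρ g : Matrix (Fin n) (Fin n) k) * (algebraMap k _ r) *
          (ρ g⁻¹ : Matrix (Fin n) (Fin n) k) = algebraMap k _ r := by
        rw [mul_assoc, Algebra.commutes, ← mul_assoc, mul_inv_coe, one_mul]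
      rw [this]
      exact Subalgebra.algebraMap_mem _ r
  | add x y hx hy ihx ihy =>
      have : (ρ g : Matrix (Fin n) (Fin n) k) * (x + y) * (ρ g⁻¹ : Matrix (Fin n) (Fin n) k) =
          (ρ g : Matrix (Fin n) (Fin n) k) * x * (ρ g⁻¹ : Matrix (Fin n) (Fin n) k) +
          (ρ g : Matrix (Fin n) (Fin n) k) * y * (ρ g⁻¹ : Matrix (Fin n) (Fin n) k) := by
        noncomm_ring
      rw [this]; exact add_mem ihx ihy
  | mul x y hx hy ihx ihy =>
      have : (ρ g : Matrix (Fin n) (Fin n) k) * (x * y) * (ρ g⁻¹ : Matrix (Fin n) (Fin n) k) =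
          ((ρ g : Matrix (Fin n) (Fin n) k) * x * (ρ g⁻¹ : Matrix (Fin n) (Fin n) k)) *
          ((ρ g : Matrix (Fin n) (Fin n) k) * y * (ρ g⁻¹ : Matrix (Fin n) (Fin n) k)) := by
        calc (ρ g : Matrix (Fin n) (Fin n) k) * (x * y) * (ρ g⁻¹ : Matrix (Fin n) (Fin n) k)
            = (ρ g : Matrix (Fin n) (Fin n) k) * x *
              ((ρ g⁻¹ : Matrix (Fin n) (Fin n) k) * (ρ g : Matrix (Fin n) (Fin n) k)) *
              y * (ρ g⁻¹ : Matrix (Fin n) (Fin n) k) := by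
                rw [inv_mul_coe, mul_one]; noncomm_ring
          _ = _ := by noncomm_ring
      rw [this]; exact mul_mem ihx ihy

/-- Conjugation by `ρ g` as a linear endomorphism of `Asub ρ`. -/
noncomputable def conjL (g : G) : Module.End k (Asub ρ) where
  toFun x := ⟨(ρ g : Matrix (Fin n) (Fin n) k) * x * (ρ g⁻¹ : Matrix (Fin n) (Fin n) k),
    conj_mem ρ g x.2⟩
  map_add' x y := by ext : 1; push_cast; noncomm_ring
  map_smul' c x := by ext : 1; push_cast; simp [Matrix.mul_smul, Matrix.smul_mul]

lemma conjL_apply (g : G) (x : Asub ρ) :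
    (conjL ρ g x : Matrix (Fin n) (Fin n) k) =
      (ρ g : Matrix (Fin n) (Fin n) k) * x * (ρ g⁻¹ : Matrix (Fin n) (Fin n) k) := rfl

lemma conjL_one : conjL ρ (1 : G) = 1 := by
  apply LinearMap.ext; intro x
  apply Subtype.ext
  rw [conjL_apply]
  simp

lemma conjL_mul (g h : G) : conjL ρ (g * h) = conjL ρ g * conjL ρ h := by
  apply LinearMap.ext; intro x
  apply Subtype.ext
  show (ρ (g * h) : Matrix (Fin n) (Fin n) k) * x * (ρ (g * h)⁻¹ : Matrix (Fin n) (Fin n) k) =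
    (ρ g : Matrix (Fin n) (Fin n) k) *
      ((ρ h : Matrix (Fin n) (Fin n) k) * x * (ρ h⁻¹ : Matrix (Fin n) (Fin n) k)) *
      (ρ g⁻¹ : Matrix (Fin n) (Fin n) k)
  rw [mul_inv_rev, map_mul, map_mul, Units.val_mul, Units.val_mul]
  noncomm_ring

/-- The conjugation representation of `G` on the endomorphisms of `Asub ρ`. -/
noncomputable def Phi : G →* (Module.End k (Asub ρ))ˣ where
  toFun g :=
    { val := conjL ρ g
      inv := conjL ρ g⁻¹
      val_inv := by rw [← conjL_mul, mul_inv_cancel, conjL_one]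
      inv_val := by rw [← conjL_mul, inv_mul_cancel, conjL_one] }
  map_one' := by ext1; exact conjL_one ρ
  map_mul' g h := by ext1; exact conjL_mul ρ g h

lemma Phi_ker (hρ : Function.Injective ρ) : (Phi ρ).ker = Subgroup.center G := by
  ext g
  rw [MonoidHom.mem_ker]
  constructor
  · intro hg
    have hg' : conjL ρ g = 1 := congrArg Units.val hg
    rw [Subgroup.mem_center_iff]
    intro h
    have hx : (conjL ρ g) ⟨(ρ h : Matrix (Fin n) (Fin n) k), mem_Asub ρ h⟩ =
        ⟨(ρ h : Matrix (Fin n) (Fin n) k), mem_Asub ρ h⟩ := by rw [hg']; rfl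
    have hx' : (ρ g : Matrix (Fin n) (Fin n) k) * (ρ h) * (ρ g⁻¹ : Matrix (Fin n) (Fin n) k)
        = (ρ h) := congrArg Subtype.val hx
    have heq : ρ (g * h * g⁻¹) = ρ h := by
      apply Units.ext
      simpa [map_mul, Units.val_mul] using hx'
    have heq' : g * h * g⁻¹ = h := hρ heq
    calc h * g = g * h * g⁻¹ * g := by rw [heq']
      _ = g * h := by group
  · intro hg
    have hcomm : ∀ x ∈ Asub ρ, (ρ g : Matrix (Fin n) (Fin n) k) * x =
        x * (ρ g : Matrix (Fin n) (Fin n) k) := by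
      intro x hx
      have hle : Asub ρ ≤ Subalgebra.centralizer k {(ρ g : Matrix (Fin n) (Fin n) k)} := by
        apply Algebra.adjoin_le
        rintro _ ⟨h, rfl⟩
        rw [SetLike.mem_coe, Subalgebra.mem_centralizer_iff]
        rintro _ rfl
        have hc : g * h = h * g := (Subgroup.mem_center_iff.mp hg h).symm
        show (ρ g : Matrix (Fin n) (Fin n) k) * (ρ h) = (ρ h) * (ρ g)
        rw [← Units.val_mul, ← Units.val_mul, ← map_mul, ← map_mul, hc]
      have hmem := hle hx
      rw [Subalgebra.mem_centralizer_iff] at hmem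
      exact hmem _ rfl
    apply Units.ext
    apply LinearMap.ext
    intro x
    apply Subtype.ext
    show (ρ g : Matrix (Fin n) (Fin n) k) * x * (ρ g⁻¹ : Matrix (Fin n) (Fin n) k)
        = (x : Matrix (Fin n) (Fin n) k)
    rw [hcomm x x.2, mul_assoc, mul_inv_coe, mul_one]

end stmt10

end Aux

/-- If `G` is linear then `G/Z(G)` is linear; consequently if `G/Z(G)` is
not linear then `G` is not linear. -/
theorem stmt10 (G : Type) [Group G] (hG : IsLinearGroup G) :
    IsLinearGroup (G ⧸ Subgroup.center G) := by
  obtain ⟨k, _, n, ρ, hρ⟩ := hG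
  haveI : FiniteDimensional k (stmt10.Asub ρ) := inferInstance
  set m := Module.finrank k (stmt10.Asub ρ) with hm
  let b : Module.Basis (Fin m) k (stmt10.Asub ρ) := Module.finBasis k (stmt10.Asub ρ)
  let e : (Module.End k (stmt10.Asub ρ))ˣ ≃* (Matrix (Fin m) (Fin m) k)ˣ :=
    Units.mapEquiv (LinearMap.toMatrixAlgEquiv b).toRingEquiv.toMulEquiv
  let Ψ : G →* Matrix.GeneralLinearGroup (Fin m) k := e.toMonoidHom.comp (stmt10.Phi ρ)
  have hker : Ψ.ker = Subgroup.center G := by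
    rw [← stmt10.Phi_ker ρ hρ]
    ext g
    simp only [MonoidHom.mem_ker, Ψ, MonoidHom.comp_apply, MulEquiv.coe_toMonoidHom]
    constructor
    · intro h
      exact e.injective (a₂ := 1) (by simpa using h)
    · intro h; rw [h, map_one]
  refine ⟨k, inferInstance, m, (QuotientGroup.kerLift Ψ).comp
    (QuotientGroup.quotientMulEquivOfEq hker.symm).toMonoidHom, ?_⟩
  intro x y hxy
  have h1 := QuotientGroup.kerLift_injective Ψ hxy
  exact (QuotientGroup.quotientMulEquivOfEq hker.symm).injective h1
end
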